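/- (The integral is well defined.) Let X be a Dedekind complete Riesz space with strong unit e, let (G, Σ, μ) be as in the context, and let F be a free filter on ℕ. Let f : G → X, and for j = 1, 2 let (f_n^j)_{n∈ℕ} be sequences in L* that are equi-absolutely continuous with respect to the modular ι and F and that μ-converge to f (relative to F). Suppose l₁, l₂ : Σ → X satisfy: for j = 1, 2 there is an (o)-sequence (σ_p^j) in X such that for every p, {n ∈ ℕ : |∫_A f_n^j dμ − l_j(A)| ≤ σ_p^j for every A ∈ Σ} ∈ F. Then l₁(A) = l₂(A) for every A ∈ Σ. -/

import Mathlib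

open scoped ENNReal

/-- An `(o)`-sequence in a lattice-ordered group: a decreasing sequence of nonnegative
elements whose infimum is `0`. -/
def IsOSeq {α : Type*} [Lattice α] [AddCommGroup α] (σ : ℕ → α) : Prop :=
  Antitone σ ∧ (∀ p, 0 ≤ σ p) ∧ IsGLB (Set.range σ) 0

/-- `f` belongs to `L*`: it is simple (finite range, measurable level sets) and vanishes
outside a set of finite measure. -/
def MemLStar {X G : Type*} [Zero X] [MeasurableSpace G] (μ : Set G → ℝ≥0∞) (f : G → X) : Prop :=
  (Set.range f).Finite ∧ (∀ x : X, MeasurableSet (f ⁻¹' {x})) ∧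
    ∃ S : Set G, MeasurableSet S ∧ μ S < ⊤ ∧ ∀ t ∉ S, f t = 0

/-- The elementary integral `∫_A f dμ = Σ_{x} μ(A ∩ f⁻¹{x}) • x` of a simple function. -/
noncomputable def elemInt {X G : Type*} [AddCommGroup X] [Module ℝ X] [MeasurableSpace G]
    (μ : Set G → ℝ≥0∞) (A : Set G) (f : G → X) : X :=
  ∑ᶠ x : X, (μ (A ∩ f ⁻¹' {x})).toReal • x

/-- The modular `ι(f) = ∫_G |f| dμ` on `L*`. -/
noncomputable def iota {X G : Type*} [Lattice X] [AddCommGroup X] [Module ℝ X]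
    [MeasurableSpace G] (μ : Set G → ℝ≥0∞) (f : G → X) : X :=
  elemInt μ Set.univ fun t => |f t|

/-- The sequence `f z : G → X` `μ`-converges to `g : G → X` relative to the filter `F`. -/
def MuConv {X G : Type*} [Lattice X] [AddCommGroup X] [Module ℝ X] [MeasurableSpace G]
    (μ : Set G → ℝ≥0∞) (F : Filter ℕ) (e : X) (f : ℕ → G → X) (g : G → X) : Prop :=
  ∃ ε : ℕ → ℝ, IsOSeq ε ∧ ∃ σ : ℕ → ℝ, IsOSeq σ ∧
    ∃ A : ℕ → ℕ → Set G, (∀ z p, MeasurableSet (A z p)) ∧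
      (∀ z p, {t : G | ¬ |f z t - g t| ≤ ε p • e} ⊆ A z p) ∧
      (∀ p, {z : ℕ | μ (A z p) ≤ ENNReal.ofReal (σ p)} ∈ F)

/-- The sequence `f z : G → X` is equi-absolutely continuous with respect to the modular `ι`
and the filter `F`. -/
def EquiACIota {X G : Type*} [Lattice X] [AddCommGroup X] [Module ℝ X] [MeasurableSpace G]
    (μ : Set G → ℝ≥0∞) (F : Filter ℕ) (f : ℕ → G → X) : Prop :=
  ∃ α : ℝ, 0 < α ∧
    (∀ σ : ℕ → ℝ, IsOSeq σ → ∃ w : ℕ → X, IsOSeq w ∧ ∃ Ξ : ℕ → Set ℕ,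
      (∀ p, Ξ p ∈ F) ∧
      ∀ p : ℕ, ∀ z ∈ Ξ p, ∀ B : Set G, MeasurableSet B → μ B ≤ ENNReal.ofReal (σ p) →
        iota μ (Set.indicator B fun t => α • f z t) ≤ w p) ∧
    (∃ r : ℕ → X, IsOSeq r ∧ ∃ B : ℕ → Set G, (∀ m, MeasurableSet (B m) ∧ μ (B m) < ⊤) ∧
      ∀ m : ℕ, {z : ℕ | iota μ (Set.indicator (B m)ᶜ fun t => α • f z t) ≤ r m} ∈ F)

/-!
Fix a measurable `A`. For every `n`, `|l₁ A - l₂ A|` is at most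
`|l₁ A - ∫_A f₁ n| + |∫_A f₁ n - ∫_A f₂ n| + |∫_A f₂ n - l₂ A|`, and the middle term is at most
`∫_G |f₁ n - f₂ n|`. Split `G` into the set `D` where `f₁ n` and `f₂ n` are not `ε_p • e`-close,
of small measure by `μ`-convergence; the rest of `B₁ ∪ B₂`, of finite measure, where the
integrand is at most `ε_p • e`; and the complement of `D ∪ B₁ ∪ B₂`. Equi-absolute continuity
bounds the integrals of `|f₁ n|` and `|f₂ n|` over the first and the last piece. Taking `n` in the
finitely many members of `F` involved gives `|l₁ A - l₂ A| ≤ a_p + b_k` with (o)-sequences `a`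
(for each `k`) and `b`, hence `l₁ A = l₂ A`. The Archimedean property, a consequence of Dedekind
completeness, is what makes `(ε_p • e)` an (o)-sequence.

The set function `μ` is repackaged as an `AddContent` on the measurable sets, whose API supplies
monotonicity and finite (sub)additivity.
-/

open MeasureTheory Set Filter

section LatticeOrderedModule

variable {α : Type*} [Lattice α] [AddCommGroup α] [IsOrderedAddMonoid α]

lemma abs_sub_le_abs_sub_add_abs_sub (a b c : α) : |a - c| ≤ |a - b| + |b - c| := by
  simpa only [sub_add_sub_cancel] using abs_add_le (a - b) (b - c)

lemma abs_sub_le_abs_add_abs (a b : α) : |a - b| ≤ |a| + |b| := by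
  simpa only [sub_zero, zero_sub, abs_neg] using abs_sub_le_abs_sub_add_abs_sub a 0 b

lemma abs_sub_le_abs_sub_add_abs_sub_add_abs_sub (a b c d : α) :
    |a - d| ≤ |a - b| + |b - c| + |c - d| :=
  (abs_sub_le_abs_sub_add_abs_sub a c d).trans
    (add_le_add_left (abs_sub_le_abs_sub_add_abs_sub a b c) _)

variable [Module ℝ α] [PosSMulMono ℝ α]

lemma abs_smul_of_nonneg {c : ℝ} (hc : 0 ≤ c) (x : α) : |c • x| = c • |x| := by
  rcases hc.eq_or_lt with rfl | hc
  · simp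
  · rw [abs, abs, ← smul_neg]
    exact ((OrderIso.smulRight hc).map_sup x (-x)).symm

/-- The Archimedean property of a Dedekind complete space: `s = sup_n n • c` satisfies
`s + c ≤ s`. -/
lemma le_zero_of_forall_le_smul (hDC : ∀ S : Set α, S.Nonempty → BddAbove S → ∃ x, IsLUB S x)
    {c e : α} (he : 0 ≤ e) (h : ∀ t : ℝ, 0 < t → c ≤ t • e) : c ≤ 0 := by
  have hbdd : ∀ n : ℕ, (n : ℝ) • c ≤ e := by
    intro n
    rcases n.eq_zero_or_pos with rfl | hn
    · simpa using he
    · exact (le_inv_smul_iff_of_pos (by positivity)).1 (h _ (by positivity))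
  obtain ⟨s, hs⟩ := hDC (range fun n : ℕ => (n : ℝ) • c) (range_nonempty _)
    ⟨e, by rintro _ ⟨n, rfl⟩; exact hbdd n⟩
  have : s ≤ s - c := hs.2 <| by
    rintro _ ⟨n, rfl⟩
    rw [le_sub_iff_add_le]
    simpa [add_smul] using hs.1 ⟨n + 1, rfl⟩
  simpa using this

end LatticeOrderedModule

section OSeq

variable {α : Type*} [Lattice α] [AddCommGroup α] {σ τ : ℕ → α}

lemma IsOSeq.of_forall_le (hanti : Antitone σ) (hnonneg : ∀ p, 0 ≤ σ p)
    (hlb : ∀ c, (∀ p, c ≤ σ p) → c ≤ 0) : IsOSeq σ :=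
  ⟨hanti, hnonneg, by rintro _ ⟨p, rfl⟩; exact hnonneg p, fun c hc => hlb c fun p => hc ⟨p, rfl⟩⟩

lemma IsOSeq.const_smul [Module ℝ α] [PosSMulMono ℝ α] (hσ : IsOSeq σ) {c : ℝ} (hc : 0 ≤ c) :
    IsOSeq fun p => c • σ p := by
  refine .of_forall_le (fun p q h => smul_le_smul_of_nonneg_left (hσ.1 h) hc)
    (fun p => smul_nonneg hc (hσ.2.1 p)) fun d hd => ?_
  rcases hc.eq_or_lt with rfl | hc
  · simpa using hd 0
  · have : c⁻¹ • d ≤ 0 := hσ.2.2.2 <| by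
      rintro _ ⟨p, rfl⟩; exact (inv_smul_le_iff_of_pos hc).2 (hd p)
    simpa using (inv_smul_le_iff_of_pos hc).1 this

variable [IsOrderedAddMonoid α]

lemma IsOSeq.le_of_forall_le_add (hσ : IsOSeq σ) {x y : α} (h : ∀ p, x ≤ σ p + y) : x ≤ y :=
  sub_nonpos.1 <| hσ.2.2.2 <| by rintro _ ⟨p, rfl⟩; exact sub_le_iff_le_add.2 (h p)

lemma IsOSeq.eq_zero_of_forall_abs_le (hσ : IsOSeq σ) {x : α} (h : ∀ p, |x| ≤ σ p) : x = 0 := by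
  have hx : |x| ≤ 0 := hσ.2.2.2 <| by rintro _ ⟨p, rfl⟩; exact h p
  exact le_antisymm ((le_abs_self x).trans hx) (neg_nonpos.1 ((neg_le_abs x).trans hx))

lemma IsOSeq.add (hσ : IsOSeq σ) (hτ : IsOSeq τ) : IsOSeq (σ + τ) :=
  .of_forall_le (hσ.1.add hτ.1) (fun p => add_nonneg (hσ.2.1 p) (hτ.2.1 p)) fun _ hc =>
    hτ.le_of_forall_le_add fun q => (add_zero (τ q)).symm ▸ hσ.le_of_forall_le_add fun p =>
      (hc (max p q)).trans (add_le_add (hσ.1 (le_max_left p q)) (hτ.1 (le_max_right p q)))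

lemma IsOSeq.smul_right [Module ℝ α] [PosSMulMono ℝ α]
    (hDC : ∀ S : Set α, S.Nonempty → BddAbove S → ∃ x, IsLUB S x)
    {ε : ℕ → ℝ} (hε : IsOSeq ε) {e : α} (he : 0 ≤ e) : IsOSeq fun p => ε p • e :=
  .of_forall_le (fun p q h => smul_le_smul_of_nonneg_right (hε.1 h) he)
    (fun p => smul_nonneg (hε.2.1 p) he) fun c hc => le_zero_of_forall_le_smul hDC he fun t ht => by
      obtain ⟨p, hp⟩ : ∃ p, ε p < t := by
        by_contra! h
        exact ht.not_ge (hε.2.2.2 <| by rintro _ ⟨p, rfl⟩; exact h p)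
      exact (hc p).trans (smul_le_smul_of_nonneg_right hp.le he)

end OSeq

section Content

variable {G : Type*} [MeasurableSpace G]

lemma isSetRing_measurableSet : IsSetRing {s : Set G | MeasurableSet s} :=
  ⟨.empty, fun _ _ => .union, fun _ _ => .diff⟩

lemma exists_addContent_coe_eq {μ : Set G → ℝ≥0∞} (hμ0 : μ ∅ = 0)
    (hμadd : ∀ A B : Set G, MeasurableSet A → MeasurableSet B → Disjoint A B →
      μ (A ∪ B) = μ A + μ B) :
    ∃ m : AddContent ℝ≥0∞ {s : Set G | MeasurableSet s}, ⇑m = μ :=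
  ⟨isSetRing_measurableSet.addContent_of_union μ hμ0 (hμadd _ _ · · ·), rfl⟩

variable {m : AddContent ℝ≥0∞ {s : Set G | MeasurableSet s}}

lemma addContent_mono_of_measurableSet {s t : Set G} (hs : MeasurableSet s)
    (ht : MeasurableSet t) (hst : s ⊆ t) : m s ≤ m t :=
  addContent_mono isSetRing_measurableSet.isSetSemiring hs ht hst

lemma addContent_union_lt_top {s t : Set G} (hs : MeasurableSet s) (ht : MeasurableSet t)
    (hs' : m s < ⊤) (ht' : m t < ⊤) : m (s ∪ t) < ⊤ :=
  (addContent_union_le isSetRing_measurableSet hs ht).trans_lt (ENNReal.add_lt_top.2 ⟨hs', ht'⟩)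

namespace MemLStar

variable {X Y Z : Type*} [Zero X] [Zero Y] [Zero Z] {f : G → X} {g : G → Y}

def toSimpleFunc {μ : Set G → ℝ≥0∞} (hf : MemLStar μ f) : SimpleFunc G X := ⟨f, hf.2.1, hf.1⟩

lemma measure_inter_preimage_lt_top (hf : MemLStar m f) {A : Set G} (hA : MeasurableSet A)
    {x : X} (hx : x ≠ 0) : m (A ∩ f ⁻¹' {x}) < ⊤ := by
  obtain ⟨-, hfib, S, hS, hSfin, hfS⟩ := hf
  refine (addContent_mono_of_measurableSet (hA.inter (hfib x)) hS ?_).trans_lt hSfin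
  rintro t ⟨-, rfl⟩
  by_contra ht
  exact hx (hfS t ht)

lemma map₂ (hf : MemLStar m f) (hg : MemLStar m g) (Φ : X → Y → Z) (hΦ : Φ 0 0 = 0) :
    MemLStar m fun t => Φ (f t) (g t) := by
  let φ := (hf.toSimpleFunc.pair hg.toSimpleFunc).map (Function.uncurry Φ)
  obtain ⟨S, hS, hSfin, hfS⟩ := hf.2.2
  obtain ⟨T, hT, hTfin, hgT⟩ := hg.2.2
  refine ⟨φ.finite_range, φ.measurableSet_fiber, S ∪ T, hS.union hT,
    addContent_union_lt_top hS hT hSfin hTfin, fun t ht => ?_⟩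
  rw [mem_union, not_or] at ht
  simp [hfS t ht.1, hgT t ht.2, hΦ]

lemma map (hf : MemLStar m f) (Φ : X → Y) (hΦ : Φ 0 = 0) : MemLStar m fun t => Φ (f t) :=
  hf.map₂ hf (fun x _ => Φ x) hΦ

end MemLStar

lemma memLStar_indicator_const {X : Type*} [Zero X] {B : Set G} (hB : MeasurableSet B)
    (hBfin : m B < ⊤) (v : X) : MemLStar m (B.indicator fun _ => v) := by
  let φ := (SimpleFunc.const G v).piecewise B hB 0
  exact ⟨φ.finite_range, φ.measurableSet_fiber, B, hB, hBfin, fun t ht => indicator_of_notMem ht _⟩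

end Content

section ElemInt

variable {G X : Type*} [MeasurableSpace G] [AddCommGroup X] [Module ℝ X]
  {m : AddContent ℝ≥0∞ {s : Set G | MeasurableSet s}} {f g : G → X} {A B : Set G}

lemma elemInt_comp_eq_sum {Y : Type*} (ψ : SimpleFunc G Y) {Φ : Y → X}
    (hΦψ : MemLStar m fun t => Φ (ψ t)) (hA : MeasurableSet A) :
    elemInt m A (fun t => Φ (ψ t)) = ∑ y ∈ ψ.range, (m (A ∩ ψ ⁻¹' {y})).toReal • Φ y := by
  classical
  have hsupp : (Function.support fun x => (m (A ∩ (fun t => Φ (ψ t)) ⁻¹' {x})).toReal • x) ⊆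
      ψ.range.image Φ := by
    intro x hx
    obtain ⟨t, -, rfl⟩ : (A ∩ (fun t => Φ (ψ t)) ⁻¹' {x}).Nonempty := by
      by_contra h
      simp [not_nonempty_iff_eq_empty.1 h] at hx
    exact Finset.mem_image_of_mem Φ (ψ.mem_range_self t)
  rw [elemInt, finsum_eq_sum_of_support_subset _ hsupp, Finset.sum_image']
  intro y _
  rcases eq_or_ne (Φ y) 0 with h0 | h0
  · rw [h0, smul_zero]
    exact (Finset.sum_eq_zero fun b hb => by rw [(Finset.mem_filter.1 hb).2, smul_zero]).symm
  have hfiber : (fun t => Φ (ψ t)) ⁻¹' {Φ y} = ⋃ b ∈ {b ∈ ψ.range | Φ b = Φ y}, ψ ⁻¹' {b} := by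
    rw [Finset.set_biUnion_preimage_singleton]
    exact ψ.map_preimage_singleton Φ (Φ y)
  rw [hfiber, inter_iUnion₂, addContent_biUnion_eq isSetRing_measurableSet
      (fun b _ => hA.inter (ψ.measurableSet_fiber b))
      ((pairwiseDisjoint_fiber ψ _).mono fun _ => inter_subset_right),
    ENNReal.toReal_sum, Finset.sum_smul]
  · exact Finset.sum_congr rfl fun b hb => by rw [(Finset.mem_filter.1 hb).2]
  · intro b hb
    refine ((addContent_mono_of_measurableSet (hA.inter (ψ.measurableSet_fiber b))
      (hA.inter (hΦψ.2.1 (Φ y))) ?_).trans_lt (hΦψ.measure_inter_preimage_lt_top hA h0)).ne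
    rintro t ⟨htA, rfl⟩
    exact ⟨htA, (Finset.mem_filter.1 hb).2⟩

lemma MemLStar.elemInt_eq_sum (hf : MemLStar m f) (hA : MeasurableSet A) :
    elemInt m A f = ∑ x ∈ hf.toSimpleFunc.range, (m (A ∩ f ⁻¹' {x})).toReal • x :=
  elemInt_comp_eq_sum hf.toSimpleFunc (Φ := id) hf hA

lemma elemInt_add (hf : MemLStar m f) (hg : MemLStar m g) (hA : MeasurableSet A) :
    elemInt m A (fun t => f t + g t) = elemInt m A f + elemInt m A g := by
  let ψ := hf.toSimpleFunc.pair hg.toSimpleFunc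
  have hsum : elemInt m A (fun t => f t + g t) =
      ∑ y ∈ ψ.range, (m (A ∩ ψ ⁻¹' {y})).toReal • (y.1 + y.2) :=
    elemInt_comp_eq_sum ψ (Φ := fun y => y.1 + y.2) (hf.map₂ hg _ (add_zero 0)) hA
  have h₁ : elemInt m A f = ∑ y ∈ ψ.range, (m (A ∩ ψ ⁻¹' {y})).toReal • y.1 :=
    elemInt_comp_eq_sum ψ (Φ := Prod.fst) hf hA
  have h₂ : elemInt m A g = ∑ y ∈ ψ.range, (m (A ∩ ψ ⁻¹' {y})).toReal • y.2 :=
    elemInt_comp_eq_sum ψ (Φ := Prod.snd) hg hA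
  simp only [hsum, h₁, h₂, smul_add, Finset.sum_add_distrib]

lemma elemInt_smul (hf : MemLStar m f) (hA : MeasurableSet A) (c : ℝ) :
    elemInt m A (fun t => c • f t) = c • elemInt m A f := by
  have h : elemInt m A (fun t => c • f t) =
      ∑ x ∈ hf.toSimpleFunc.range, (m (A ∩ f ⁻¹' {x})).toReal • c • x :=
    elemInt_comp_eq_sum hf.toSimpleFunc (Φ := (c • ·)) (hf.map _ (smul_zero c)) hA
  rw [h, hf.elemInt_eq_sum hA, Finset.smul_sum]
  simp_rw [smul_comm c]

lemma elemInt_sub (hf : MemLStar m f) (hg : MemLStar m g) (hA : MeasurableSet A) :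
    elemInt m A (fun t => f t - g t) = elemInt m A f - elemInt m A g := by
  have hneg : MemLStar m fun t => (-1 : ℝ) • g t := hg.map _ (smul_zero _)
  simpa [sub_eq_add_neg] using
    (elemInt_add hf hneg hA).trans (congrArg _ (elemInt_smul hg hA (-1)))

lemma elemInt_union (hf : MemLStar m f) (hA : MeasurableSet A) (hB : MeasurableSet B)
    (hAB : Disjoint A B) : elemInt m (A ∪ B) f = elemInt m A f + elemInt m B f := by
  rw [hf.elemInt_eq_sum (hA.union hB), hf.elemInt_eq_sum hA, hf.elemInt_eq_sum hB,
    ← Finset.sum_add_distrib]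
  refine Finset.sum_congr rfl fun x _ => ?_
  rcases eq_or_ne x 0 with rfl | hx
  · simp
  rw [union_inter_distrib_right, addContent_union isSetRing_measurableSet
      (hA.inter (hf.2.1 x)) (hB.inter (hf.2.1 x))
      (hAB.mono inter_subset_left inter_subset_left),
    ENNReal.toReal_add (hf.measure_inter_preimage_lt_top hA hx).ne
      (hf.measure_inter_preimage_lt_top hB hx).ne, add_smul]

lemma elemInt_indicator (f : G → X) : elemInt m A (B.indicator f) = elemInt m (A ∩ B) f := by
  refine finsum_congr fun x => ?_
  rcases eq_or_ne x 0 with rfl | hx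
  · simp
  rw [indicator_preimage_of_notMem _ _ (mem_singleton_iff.not.2 hx.symm), inter_assoc,
    inter_comm B]

lemma elemInt_const (A : Set G) (v : X) : elemInt m A (fun _ => v) = (m A).toReal • v := by
  rw [elemInt, finsum_eq_single _ v fun x hx => ?_]
  · simp
  · simp [preimage_const_of_notMem (mem_singleton_iff.not.2 hx.symm)]

end ElemInt

section ElemIntOrder

variable {G X : Type*} [MeasurableSpace G] [AddCommGroup X] [PartialOrder X]
  [IsOrderedAddMonoid X] [Module ℝ X] [PosSMulMono ℝ X]
  {m : AddContent ℝ≥0∞ {s : Set G | MeasurableSet s}} {f g : G → X} {A B : Set G}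

lemma elemInt_nonneg (hf : ∀ t, 0 ≤ f t) : 0 ≤ elemInt m A f := by
  refine finsum_nonneg fun x => ?_
  by_cases hx : 0 ≤ x
  · exact smul_nonneg ENNReal.toReal_nonneg hx
  · have : A ∩ f ⁻¹' {x} = ∅ := eq_empty_of_forall_notMem fun t ⟨_, ht⟩ => hx (ht ▸ hf t)
    simp [this]

lemma elemInt_mono_on (hf : MemLStar m f) (hg : MemLStar m g) (hA : MeasurableSet A)
    (hfg : ∀ t ∈ A, f t ≤ g t) : elemInt m A f ≤ elemInt m A g := by
  let ψ := hf.toSimpleFunc.pair hg.toSimpleFunc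
  have h₁ : elemInt m A f = ∑ y ∈ ψ.range, (m (A ∩ ψ ⁻¹' {y})).toReal • y.1 :=
    elemInt_comp_eq_sum ψ (Φ := Prod.fst) hf hA
  have h₂ : elemInt m A g = ∑ y ∈ ψ.range, (m (A ∩ ψ ⁻¹' {y})).toReal • y.2 :=
    elemInt_comp_eq_sum ψ (Φ := Prod.snd) hg hA
  rw [h₁, h₂]
  refine Finset.sum_le_sum fun y _ => ?_
  rcases (A ∩ ψ ⁻¹' {y}).eq_empty_or_nonempty with h | ⟨t, htA, rfl⟩
  · simp [h]
  · exact smul_le_smul_of_nonneg_left (hfg t htA) ENNReal.toReal_nonneg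

lemma elemInt_mono_set (hf : MemLStar m f) (hf₀ : ∀ t, 0 ≤ f t) (hA : MeasurableSet A)
    (hB : MeasurableSet B) (hAB : A ⊆ B) : elemInt m A f ≤ elemInt m B f := by
  rw [← union_sdiff_cancel hAB, elemInt_union hf hA (hB.diff hA) disjoint_sdiff_right]
  exact le_add_of_nonneg_right (elemInt_nonneg hf₀)

lemma elemInt_le_toReal_smul (hf : MemLStar m f) (hA : MeasurableSet A) (hAfin : m A < ⊤)
    {v : X} (hfv : ∀ t ∈ A, f t ≤ v) : elemInt m A f ≤ (m A).toReal • v :=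
  calc elemInt m A f ≤ elemInt m A (A.indicator fun _ => v) :=
        elemInt_mono_on hf (memLStar_indicator_const hA hAfin v) hA fun t ht => by
          simpa [indicator_of_mem ht] using hfv t ht
    _ = (m A).toReal • v := by rw [elemInt_indicator, inter_self, elemInt_const]

end ElemIntOrder

section Modular

variable {G X : Type*} [MeasurableSpace G] [Lattice X] [AddCommGroup X]
  [IsOrderedAddMonoid X] [Module ℝ X]
  {m : AddContent ℝ≥0∞ {s : Set G | MeasurableSet s}} {f : G → X} {A B : Set G}

lemma iota_indicator (B : Set G) (f : G → X) :
    iota m (B.indicator f) = elemInt m B fun t => |f t| := by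
  calc iota m (B.indicator f) = elemInt m univ (B.indicator fun t => |f t|) :=
        congrArg _ (indicator_comp_of_zero (g := abs) abs_zero).symm
    _ = elemInt m B fun t => |f t| := by rw [elemInt_indicator, univ_inter]

variable [PosSMulMono ℝ X]

lemma abs_elemInt_le (hf : MemLStar m f) (hA : MeasurableSet A) :
    |elemInt m A f| ≤ elemInt m A fun t => |f t| := by
  have h : elemInt m A (fun t => |f t|) =
      ∑ x ∈ hf.toSimpleFunc.range, (m (A ∩ f ⁻¹' {x})).toReal • |x| :=
    elemInt_comp_eq_sum hf.toSimpleFunc (Φ := abs) (hf.map _ abs_zero) hA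
  rw [h, hf.elemInt_eq_sum hA]
  refine (Finset.le_sum_of_subadditive _ abs_zero.le abs_add_le _ _).trans_eq ?_
  simp_rw [abs_smul_of_nonneg ENNReal.toReal_nonneg]

lemma elemInt_abs_le_inv_smul_of_iota_le (hf : MemLStar m f) (hB : MeasurableSet B) {α : ℝ}
    (hα : 0 < α) {w : X} (h : iota m (B.indicator fun t => α • f t) ≤ w) :
    (elemInt m B fun t => |f t|) ≤ α⁻¹ • w := by
  simp_rw [iota_indicator, abs_smul_of_nonneg hα.le] at h
  rw [elemInt_smul (hf.map _ abs_zero) hB] at h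
  exact (le_inv_smul_iff_of_pos hα).2 h

end Modular

section Approximation

variable {G X : Type*} [MeasurableSpace G] [Lattice X] [AddCommGroup X]
  [IsOrderedAddMonoid X] [Module ℝ X]
  {m : AddContent ℝ≥0∞ {s : Set G | MeasurableSet s}} {F : Filter ℕ} {f : ℕ → G → X}

lemma MuConv.sub {e : X} {f₁ f₂ : ℕ → G → X} {g₁ g₂ : G → X} (h₁ : MuConv m F e f₁ g₁)
    (h₂ : MuConv m F e f₂ g₂) :
    MuConv m F e (fun z t => f₁ z t - f₂ z t) (fun t => g₁ t - g₂ t) := by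
  obtain ⟨ε₁, hε₁, σ₁, hσ₁, A₁, hA₁, hA₁f, hA₁F⟩ := h₁
  obtain ⟨ε₂, hε₂, σ₂, hσ₂, A₂, hA₂, hA₂f, hA₂F⟩ := h₂
  refine ⟨ε₁ + ε₂, hε₁.add hε₂, σ₁ + σ₂, hσ₁.add hσ₂, fun z p => A₁ z p ∪ A₂ z p,
    fun z p => (hA₁ z p).union (hA₂ z p), fun z p t ht => ?_, fun p => ?_⟩
  · by_contra hA
    rw [mem_union, not_or] at hA
    have h₁ : |f₁ z t - g₁ t| ≤ ε₁ p • e := not_not.1 fun h => hA.1 (hA₁f z p h)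
    have h₂ : |f₂ z t - g₂ t| ≤ ε₂ p • e := not_not.1 fun h => hA.2 (hA₂f z p h)
    refine ht ?_
    calc |f₁ z t - f₂ z t - (g₁ t - g₂ t)| = |(f₁ z t - g₁ t) - (f₂ z t - g₂ t)| := by
          rw [sub_sub_sub_comm]
      _ ≤ |f₁ z t - g₁ t| + |f₂ z t - g₂ t| := abs_sub_le_abs_add_abs _ _
      _ ≤ ε₁ p • e + ε₂ p • e := add_le_add h₁ h₂
      _ = (ε₁ + ε₂) p • e := (add_smul _ _ _).symm
  · filter_upwards [hA₁F p, hA₂F p] with z hz₁ hz₂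
    calc m (A₁ z p ∪ A₂ z p) ≤ m (A₁ z p) + m (A₂ z p) :=
          addContent_union_le isSetRing_measurableSet (hA₁ z p) (hA₂ z p)
      _ ≤ ENNReal.ofReal (σ₁ p) + ENNReal.ofReal (σ₂ p) := add_le_add hz₁ hz₂
      _ = ENNReal.ofReal ((σ₁ + σ₂) p) := (ENNReal.ofReal_add (hσ₁.2.1 p) (hσ₂.2.1 p)).symm

variable [PosSMulMono ℝ X]

lemma EquiACIota.exists_elemInt_abs_le_of_measure_le (h : EquiACIota m F f)
    (hf : ∀ z, MemLStar m (f z)) {σ : ℕ → ℝ} (hσ : IsOSeq σ) :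
    ∃ w : ℕ → X, IsOSeq w ∧ ∀ p, ∀ᶠ z in F, ∀ B : Set G, MeasurableSet B →
      m B ≤ ENNReal.ofReal (σ p) → (elemInt m B fun t => |f z t|) ≤ w p := by
  obtain ⟨α, hα, hsmall, -⟩ := h
  obtain ⟨w, hw, Ξ, hΞ, hw_bound⟩ := hsmall σ hσ
  exact ⟨fun p => α⁻¹ • w p, hw.const_smul (inv_nonneg.2 hα.le), fun p =>
    mem_of_superset (hΞ p) fun z hz B hB hBσ =>
      elemInt_abs_le_inv_smul_of_iota_le (hf z) hB hα (hw_bound p z hz B hB hBσ)⟩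

lemma EquiACIota.exists_elemInt_abs_compl_le (h : EquiACIota m F f)
    (hf : ∀ z, MemLStar m (f z)) :
    ∃ r : ℕ → X, IsOSeq r ∧ ∃ B : ℕ → Set G, (∀ k, MeasurableSet (B k) ∧ m (B k) < ⊤) ∧
      ∀ k, ∀ᶠ z in F, (elemInt m (B k)ᶜ fun t => |f z t|) ≤ r k := by
  obtain ⟨α, hα, -, r, hr, B, hB, hr_bound⟩ := h
  exact ⟨fun k => α⁻¹ • r k, hr.const_smul (inv_nonneg.2 hα.le), B, hB, fun k =>
    mem_of_superset (hr_bound k) fun z hz =>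
      elemInt_abs_le_inv_smul_of_iota_le (hf z) (hB k).1.compl hα hz⟩

lemma abs_elemInt_sub_elemInt_le {f₁ f₂ : G → X} (hf₁ : MemLStar m f₁) (hf₂ : MemLStar m f₂)
    {A D B₁ B₂ : Set G} (hA : MeasurableSet A) (hD : MeasurableSet D) (hB₁ : MeasurableSet B₁)
    (hB₂ : MeasurableSet B₂) (hB₁fin : m B₁ < ⊤) (hB₂fin : m B₂ < ⊤) {v : X} (hv : 0 ≤ v)
    (hclose : ∀ t ∉ D, |f₁ t - f₂ t| ≤ v) :
    |elemInt m A f₁ - elemInt m A f₂| ≤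
      (elemInt m D fun t => |f₁ t|) + (elemInt m D fun t => |f₂ t|) + (m (B₁ ∪ B₂)).toReal • v
        + ((elemInt m B₁ᶜ fun t => |f₁ t|) + elemInt m B₂ᶜ fun t => |f₂ t|) := by
  set B := B₁ ∪ B₂
  have hB : MeasurableSet B := hB₁.union hB₂
  have hBfin : m B < ⊤ := addContent_union_lt_top hB₁ hB₂ hB₁fin hB₂fin
  have hsub : MemLStar m fun t => f₁ t - f₂ t := hf₁.map₂ hf₂ _ (sub_zero 0)
  have hg : MemLStar m fun t => |f₁ t - f₂ t| := hsub.map _ abs_zero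
  have habs₁ : MemLStar m fun t => |f₁ t| := hf₁.map _ abs_zero
  have habs₂ : MemLStar m fun t => |f₂ t| := hf₂.map _ abs_zero
  have htriangle : ∀ P, MeasurableSet P → (elemInt m P fun t => |f₁ t - f₂ t|) ≤
      (elemInt m P fun t => |f₁ t|) + elemInt m P fun t => |f₂ t| := fun P hP =>
    (elemInt_mono_on hg (habs₁.map₂ habs₂ _ (add_zero 0)) hP fun t _ =>
      abs_sub_le_abs_add_abs _ _).trans_eq (elemInt_add habs₁ habs₂ hP)
  have hBD : m (B \ D) ≤ m B := addContent_mono_of_measurableSet (hB.diff hD) hB sdiff_subset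
  have hmiddle : (elemInt m (B \ D) fun t => |f₁ t - f₂ t|) ≤ (m B).toReal • v :=
    (elemInt_le_toReal_smul hg (hB.diff hD) (hBD.trans_lt hBfin) fun t ht => hclose t ht.2).trans
      (smul_le_smul_of_nonneg_right (ENNReal.toReal_mono hBfin.ne hBD) hv)
  have hDB : MeasurableSet (D ∪ B)ᶜ := (hD.union hB).compl
  have htail : (elemInt m (D ∪ B)ᶜ fun t => |f₁ t - f₂ t|) ≤
      (elemInt m B₁ᶜ fun t => |f₁ t|) + elemInt m B₂ᶜ fun t => |f₂ t| :=
    (htriangle _ hDB).trans <| add_le_add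
      (elemInt_mono_set habs₁ (fun t => abs_nonneg _) hDB hB₁.compl
        (compl_subset_compl.2 (subset_union_left.trans subset_union_right)))
      (elemInt_mono_set habs₂ (fun t => abs_nonneg _) hDB hB₂.compl
        (compl_subset_compl.2 (subset_union_right.trans subset_union_right)))
  calc |elemInt m A f₁ - elemInt m A f₂| = |elemInt m A fun t => f₁ t - f₂ t| := by
        rw [elemInt_sub hf₁ hf₂ hA]
    _ ≤ elemInt m A fun t => |f₁ t - f₂ t| := abs_elemInt_le hsub hA
    _ ≤ elemInt m univ fun t => |f₁ t - f₂ t| :=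
        elemInt_mono_set hg (fun t => abs_nonneg _) hA .univ (subset_univ A)
    _ = (elemInt m D fun t => |f₁ t - f₂ t|) + (elemInt m (B \ D) fun t => |f₁ t - f₂ t|)
          + elemInt m (D ∪ B)ᶜ fun t => |f₁ t - f₂ t| := by
        rw [← elemInt_union hg hD (hB.diff hD) disjoint_sdiff_right, union_sdiff_self,
          ← elemInt_union hg (hD.union hB) hDB disjoint_compl_right, union_compl_self]
    _ ≤ _ := add_le_add (add_le_add (htriangle D hD) hmiddle) htail

end Approximation

theorem integral_well_defined_general
    {X G : Type*} [Lattice X] [AddCommGroup X]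
    [CovariantClass X X (· + ·) (· ≤ ·)] [Module ℝ X] [PosSMulMono ℝ X]
    [MeasurableSpace G]
    -- Dedekind completeness of X
    (hDC : ∀ S : Set X, S.Nonempty → BddAbove S → ∃ x, IsLUB S x)
    -- strong unit e
    (e : X) (he : 0 < e)
    -- finitely additive measure μ : Σ → [0,∞]
    (μ : Set G → ℝ≥0∞) (hμ0 : μ ∅ = 0)
    (hμadd : ∀ A B : Set G, MeasurableSet A → MeasurableSet B → Disjoint A B →
      μ (A ∪ B) = μ A + μ B)
    -- F is a free filter on ℕ
    (F : Filter ℕ) (hFproper : F.NeBot)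
    -- the target function and the two defining sequences
    (f : G → X) (f₁ f₂ : ℕ → G → X)
    (hmem₁ : ∀ n, MemLStar μ (f₁ n)) (hmem₂ : ∀ n, MemLStar μ (f₂ n))
    (hEAC₁ : EquiACIota μ F f₁) (hEAC₂ : EquiACIota μ F f₂)
    (hconv₁ : MuConv μ F e f₁ f) (hconv₂ : MuConv μ F e f₂ f)
    -- the two limit set functions
    (l₁ l₂ : Set G → X)
    (σ₁ : ℕ → X) (hσ₁ : IsOSeq σ₁)
    (hl₁ : ∀ p : ℕ,
      {n : ℕ | ∀ A : Set G, MeasurableSet A → |elemInt μ A (f₁ n) - l₁ A| ≤ σ₁ p} ∈ F)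
    (σ₂ : ℕ → X) (hσ₂ : IsOSeq σ₂)
    (hl₂ : ∀ p : ℕ,
      {n : ℕ | ∀ A : Set G, MeasurableSet A → |elemInt μ A (f₂ n) - l₂ A| ≤ σ₂ p} ∈ F) :
    ∀ A : Set G, MeasurableSet A → l₁ A = l₂ A := by
  have : IsOrderedAddMonoid X := { add_le_add_left := fun _ _ h c => add_le_add_left h c }
  obtain ⟨m, rfl⟩ := exists_addContent_coe_eq hμ0 hμadd
  intro A hA
  obtain ⟨ε, hε, τ, hτ, D, hD, hDf, hDF⟩ := hconv₁.sub hconv₂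
  obtain ⟨w₁, hw₁, hsmall₁⟩ := hEAC₁.exists_elemInt_abs_le_of_measure_le hmem₁ hτ
  obtain ⟨w₂, hw₂, hsmall₂⟩ := hEAC₂.exists_elemInt_abs_le_of_measure_le hmem₂ hτ
  obtain ⟨r₁, hr₁, B₁, hB₁, htail₁⟩ := hEAC₁.exists_elemInt_abs_compl_le hmem₁
  obtain ⟨r₂, hr₂, B₂, hB₂, htail₂⟩ := hEAC₂.exists_elemInt_abs_compl_le hmem₂
  have key : ∀ k p, |l₁ A - l₂ A| ≤
      (σ₁ + σ₂ + (w₁ + w₂ + fun p => (m (B₁ k ∪ B₂ k)).toReal • (ε p • e))) p + (r₁ + r₂) k := by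
    intro k p
    obtain ⟨n, hl₁n, hl₂n, hDn, hsmall₁n, hsmall₂n, htail₁n, htail₂n⟩ :=
      (Eventually.and (hl₁ p) <| Eventually.and (hl₂ p) <| Eventually.and (hDF p) <|
        (hsmall₁ p).and <| (hsmall₂ p).and <| (htail₁ k).and (htail₂ k)).exists
    have hclose : ∀ t ∉ D n p, |f₁ n t - f₂ n t| ≤ ε p • e := fun t ht => by
      simpa using not_not.1 (mt (@hDf n p t) ht)
    have hn := abs_elemInt_sub_elemInt_le (hmem₁ n) (hmem₂ n) hA (hD n p) (hB₁ k).1 (hB₂ k).1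
      (hB₁ k).2 (hB₂ k).2 (smul_nonneg (hε.2.1 p) he.le) hclose
    calc |l₁ A - l₂ A| ≤ |l₁ A - elemInt m A (f₁ n)|
          + |elemInt m A (f₁ n) - elemInt m A (f₂ n)| + |elemInt m A (f₂ n) - l₂ A| :=
          abs_sub_le_abs_sub_add_abs_sub_add_abs_sub _ _ _ _
      _ ≤ σ₁ p + (w₁ p + w₂ p + (m (B₁ k ∪ B₂ k)).toReal • (ε p • e) + (r₁ k + r₂ k)) + σ₂ p := by
          rw [abs_sub_comm (l₁ A)]
          gcongr
          · exact hl₁n A hA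
          · refine hn.trans ?_
            gcongr
            exacts [hsmall₁n _ (hD n p) hDn, hsmall₂n _ (hD n p) hDn]
          · exact hl₂n A hA
      _ = _ := by simp only [Pi.add_apply]; abel
  refine sub_eq_zero.1 <| (hr₁.add hr₂).eq_zero_of_forall_abs_le fun k =>
    IsOSeq.le_of_forall_le_add ?_ (key k)
  exact (hσ₁.add hσ₂).add <|
    (hw₁.add hw₂).add <| (hε.smul_right hDC he.le).const_smul ENNReal.toReal_nonneg

/-- **The integral is well defined.** If two defining sequences in `L*` (equi-absolutely
continuous with respect to `ι` and `μ`-convergent to `f`) have integrals converging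
`(o_F)`-uniformly to set functions `l₁` and `l₂` respectively, then `l₁ = l₂`. -/
theorem integral_well_defined
    {X G : Type*} [Lattice X] [AddCommGroup X]
    [CovariantClass X X (· + ·) (· ≤ ·)] [Module ℝ X] [PosSMulMono ℝ X]
    [MeasurableSpace G]
    -- Dedekind completeness of X
    (hDC : ∀ S : Set X, S.Nonempty → BddAbove S → ∃ x, IsLUB S x)
    -- strong unit e
    (e : X) (he : 0 < e) (hstrong : ∀ x : X, ∃ c : ℝ, 0 < c ∧ |x| ≤ c • e)
    -- finitely additive measure μ : Σ → [0,∞]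
    (μ : Set G → ℝ≥0∞) (hμ0 : μ ∅ = 0)
    (hμadd : ∀ A B : Set G, MeasurableSet A → MeasurableSet B → Disjoint A B →
      μ (A ∪ B) = μ A + μ B)
    -- F is a free filter on ℕ
    (F : Filter ℕ) (hFproper : F.NeBot) (hFfree : F ≤ Filter.cofinite)
    -- the target function and the two defining sequences
    (f : G → X) (f₁ f₂ : ℕ → G → X)
    (hmem₁ : ∀ n, MemLStar μ (f₁ n)) (hmem₂ : ∀ n, MemLStar μ (f₂ n))
    (hEAC₁ : EquiACIota μ F f₁) (hEAC₂ : EquiACIota μ F f₂)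
    (hconv₁ : MuConv μ F e f₁ f) (hconv₂ : MuConv μ F e f₂ f)
    -- the two limit set functions
    (l₁ l₂ : Set G → X)
    (σ₁ : ℕ → X) (hσ₁ : IsOSeq σ₁)
    (hl₁ : ∀ p : ℕ,
      {n : ℕ | ∀ A : Set G, MeasurableSet A → |elemInt μ A (f₁ n) - l₁ A| ≤ σ₁ p} ∈ F)
    (σ₂ : ℕ → X) (hσ₂ : IsOSeq σ₂)
    (hl₂ : ∀ p : ℕ,
      {n : ℕ | ∀ A : Set G, MeasurableSet A → |elemInt μ A (f₂ n) - l₂ A| ≤ σ₂ p} ∈ F) :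
    ∀ A : Set G, MeasurableSet A → l₁ A = l₂ A :=
  integral_well_defined_general hDC e he μ hμ0 hμadd F hFproper f f₁ f₂ hmem₁ hmem₂ hEAC₁ hEAC₂
    hconv₁ hconv₂ l₁ l₂ σ₁ hσ₁ hl₁ σ₂ hσ₂ hl₂
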